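/- For every integer n ≥ 5 and every real x with exp(−√n) < x ≤ 1, one has |x − A_n(x)| ≤ 3·exp(−√n). -/

import Mathlib

/-- `newmanAlpha n = exp(-1/√n)`. -/
noncomputable def newmanAlpha (n : ℕ) : ℝ := Real.exp (-1 / Real.sqrt n)

/-- The Newman polynomial `N_n(t) = ∏_{i=1}^{n-1} (t + α_n^i)`. -/
noncomputable def newmanPoly (n : ℕ) (t : ℝ) : ℝ :=
  ∏ i ∈ Finset.Icc 1 (n - 1), (t + (newmanAlpha n) ^ i)

/-- The Newman approximant `A_n(t) = t (N_n(t) - N_n(-t)) / (N_n(t) + N_n(-t))`. -/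
noncomputable def newmanApprox (n : ℕ) (t : ℝ) : ℝ :=
  t * (newmanPoly n t - newmanPoly n (-t)) / (newmanPoly n t + newmanPoly n (-t))

/-!
Newman's estimate. With `α = exp (-1/√n)`, each factor of `N_n(-x) / N_n(x)` is
`|αⁱ - x| / (αⁱ + x) ≤ exp (-2 min (αⁱ/x, x/αⁱ))`, by `(1 - u)/(1 + u) ≤ e^{-2u}`.
Placing `x` between consecutive powers `α^(m+1) < x ≤ α^m`, the ratios `min (αⁱ/x, x/αⁱ)` dominate
the powers `α^(m+1-i)` for `i ≤ m` and `α^(i-m)` for `i > m`, whose sum is at least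
`∑_{0<i<n} αⁱ = (α - αⁿ)/(1 - α) ≥ √n/2`. Hence `|N_n(-x)| ≤ e^{-√n} N_n(x)`, and
`x - A_n(x) = 2x N_n(-x) / (N_n(x) + N_n(-x))` is at most `2e^{-√n}/(1 - e^{-√n}) ≤ 3e^{-√n}`.
-/

open Finset Real

lemma one_sub_le_one_add_mul_exp_neg_two_mul {u : ℝ} (hu : 0 ≤ u) :
    1 - u ≤ (1 + u) * exp (-(2 * u)) := by
  rcases le_or_gt 1 u with h1 | h1
  · nlinarith [exp_pos (-(2 * u))]
  have hseries := hasSum_log_sub_log_of_abs_lt_one (abs_lt.2 ⟨by linarith, h1⟩)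
  have hlog : 2 * u ≤ log (1 + u) - log (1 - u) := by
    simpa using le_hasSum hseries 0 fun k _ => by positivity
  calc 1 - u = (1 + u) * exp (-(log (1 + u) - log (1 - u))) := by
        rw [exp_neg, exp_sub, exp_log (by linarith), exp_log (by linarith)]; field_simp
    _ ≤ (1 + u) * exp (-(2 * u)) := by gcongr

lemma abs_sub_le_add_mul_exp_neg_min {a b : ℝ} (ha : 0 < a) (hb : 0 < b) :
    |a - b| ≤ (a + b) * exp (-(2 * min (a / b) (b / a))) := by
  wlog hba : b ≤ a generalizing a b
  · simpa [abs_sub_comm, add_comm, min_comm] using this hb ha (le_of_not_ge hba)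
  have hmin : min (a / b) (b / a) = b / a :=
    min_eq_right ((div_le_one ha).2 hba |>.trans ((one_le_div hb).2 hba))
  calc |a - b| = a * (1 - b / a) := by rw [abs_of_nonneg (by linarith)]; field_simp
    _ ≤ a * ((1 + b / a) * exp (-(2 * (b / a)))) := by
        gcongr; exact one_sub_le_one_add_mul_exp_neg_two_mul (by positivity)
    _ = (a + b) * exp (-(2 * min (a / b) (b / a))) := by rw [hmin]; field_simp

lemma sum_Ico_pow_le_add {R : Type*} [Semiring R] [PartialOrder R] [IsOrderedRing R] {α : R}
    (hα0 : 0 ≤ α) (hα1 : α ≤ 1) {m n : ℕ} (hmn : m < n) :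
    ∑ i ∈ Ico 1 n, α ^ i ≤ ∑ i ∈ Ico 1 (m + 1), α ^ i + ∑ i ∈ Ico 1 (n - m), α ^ i := by
  rw [← sum_Ico_consecutive (α ^ ·) (by omega : 1 ≤ n - m) (by omega : n - m ≤ n), add_comm]
  refine add_le_add_left ?_ _
  calc ∑ i ∈ Ico (n - m) n, α ^ i = ∑ i ∈ Ico 1 (m + 1), α ^ (i + (n - m - 1)) := by
        rw [sum_Ico_add' (α ^ ·)]; congr 2 <;> omega
    _ ≤ ∑ i ∈ Ico 1 (m + 1), α ^ i :=
        sum_le_sum fun i _ => pow_le_pow_of_le_one hα0 hα1 (Nat.le_add_right _ _)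

section OrderedField

variable {K : Type*} [Field K] [LinearOrder K] [IsStrictOrderedRing K]

lemma sum_Ico_pow_le_sum_min_div {α x : K} (hα0 : 0 < α) (hα1 : α < 1) {m n : ℕ} (hmn : m < n)
    (hlo : α ^ (m + 1) ≤ x) (hhi : x ≤ α ^ m) :
    ∑ i ∈ Ico 1 n, α ^ i ≤ ∑ i ∈ Ico 1 n, min (α ^ i / x) (x / α ^ i) := by
  have hx : 0 < x := (pow_pos hα0 _).trans_le hlo
  have hpow {i j : ℕ} (h : i ≤ j) : α ^ j ≤ α ^ i := pow_le_pow_of_le_one hα0.le hα1.le h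
  have hbelow :
      ∑ i ∈ Ico 1 (m + 1), α ^ i ≤ ∑ i ∈ Ico 1 (m + 1), min (α ^ i / x) (x / α ^ i) := by
    have hreflect : ∑ i ∈ Ico 1 (m + 1), α ^ (m + 1 - i) = ∑ i ∈ Ico 1 (m + 1), α ^ i := by
      rw [sum_Ico_reflect (α ^ ·) 1 (Nat.le_succ (m + 1))]; congr 2; omega
    rw [← hreflect]
    refine sum_le_sum fun i hi => le_min ?_ ?_
    · calc α ^ (m + 1 - i) ≤ 1 := pow_le_one₀ hα0.le hα1.le
        _ ≤ α ^ i / x := (one_le_div hx).2 (hhi.trans (hpow (by grind)))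
    · rw [le_div_iff₀ (pow_pos hα0 _), ← pow_add, Nat.sub_add_cancel (by grind)]
      exact hlo
  have habove :
      ∑ i ∈ Ico 1 (n - m), α ^ i ≤ ∑ i ∈ Ico (m + 1) n, min (α ^ i / x) (x / α ^ i) := by
    have hshift : ∑ i ∈ Ico (m + 1) n, α ^ (i - m) = ∑ i ∈ Ico 1 (n - m), α ^ i := by
      have := sum_Ico_add' (fun i => α ^ (i - m)) 1 (n - m) m
      rw [Nat.sub_add_cancel hmn.le, add_comm 1 m] at this
      simp [← this]
    rw [← hshift]
    refine sum_le_sum fun i hi => le_min ?_ ?_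
    · rw [le_div_iff₀ hx]
      calc α ^ (i - m) * x ≤ α ^ (i - m) * α ^ m := by gcongr
        _ = α ^ i := by rw [← pow_add, Nat.sub_add_cancel (by grind)]
    · calc α ^ (i - m) ≤ 1 := pow_le_one₀ hα0.le hα1.le
        _ ≤ x / α ^ i := (one_le_div (pow_pos hα0 _)).2 ((hpow (by grind)).trans hlo)
  calc ∑ i ∈ Ico 1 n, α ^ i
      ≤ ∑ i ∈ Ico 1 (m + 1), α ^ i + ∑ i ∈ Ico 1 (n - m), α ^ i :=
        sum_Ico_pow_le_add hα0.le hα1.le hmn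
    _ ≤ _ := by
      rw [← sum_Ico_consecutive _ (by omega : 1 ≤ m + 1) hmn]
      exact add_le_add hbelow habove

lemma abs_sub_mul_sub_div_add_le {x N M ε : K} (hx : |x| ≤ 1) (hN : 0 < N) (hM : |M| ≤ ε * N)
    (hε : ε ≤ 1 / 3) : |x - x * (N - M) / (N + M)| ≤ 3 * ε := by
  have hMN := abs_le.1 hM
  have hεN : ε * N ≤ N / 3 := by nlinarith
  have hsum : 0 < N + M := by linarith
  have hdiff : x - x * (N - M) / (N + M) = 2 * x * M / (N + M) := by field_simp; ring
  rw [hdiff, abs_div, abs_of_pos hsum, div_le_iff₀ hsum, abs_mul, abs_mul, abs_two]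
  have hε0 : 0 ≤ ε := by nlinarith [abs_nonneg M]
  have hxM : |x| * |M| ≤ |M| := mul_le_of_le_one_left (abs_nonneg M) hx
  nlinarith [mul_le_mul_of_nonneg_left hMN.1 hε0,
    mul_nonneg (mul_nonneg hε0 hN.le) (by linarith : 0 ≤ 1 - 3 * ε)]

end OrderedField

lemma prod_abs_pow_sub_le {α x : ℝ} (hα0 : 0 < α) (hα1 : α < 1) {n : ℕ} (hlo : α ^ n < x)
    (hhi : x ≤ 1) :
    ∏ i ∈ Ico 1 n, |α ^ i - x| ≤
      exp (-(2 * ∑ i ∈ Ico 1 n, α ^ i)) * ∏ i ∈ Ico 1 n, (α ^ i + x) := by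
  have hx : 0 < x := (pow_pos hα0 n).trans hlo
  obtain ⟨m, hm_lo, hm_hi⟩ := exists_nat_pow_near_of_lt_one hx hhi hα0 hα1
  have hmn : m < n := by
    by_contra! h
    exact (hm_hi.trans (pow_le_pow_of_le_one hα0.le hα1.le h)).not_gt hlo
  calc ∏ i ∈ Ico 1 n, |α ^ i - x|
      ≤ ∏ i ∈ Ico 1 n, (α ^ i + x) * exp (-(2 * min (α ^ i / x) (x / α ^ i))) :=
        prod_le_prod (fun _ _ => abs_nonneg _)
          fun i _ => abs_sub_le_add_mul_exp_neg_min (pow_pos hα0 i) hx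
    _ = exp (-(2 * ∑ i ∈ Ico 1 n, min (α ^ i / x) (x / α ^ i))) *
          ∏ i ∈ Ico 1 n, (α ^ i + x) := by
        rw [prod_mul_distrib, ← exp_sum, mul_comm, mul_sum, ← sum_neg_distrib]
    _ ≤ exp (-(2 * ∑ i ∈ Ico 1 n, α ^ i)) * ∏ i ∈ Ico 1 n, (α ^ i + x) := by
        gcongr exp (-(2 * ?_)) * _
        exact sum_Ico_pow_le_sum_min_div hα0 hα1 hmn hm_lo.le hm_hi

lemma one_half_le_exp_neg_one_div_sub_exp_neg {s : ℝ} (hs : 11 / 5 ≤ s) :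
    1 / 2 ≤ exp (-1 / s) - exp (-s) := by
  have hinv : exp (-(5 / 11)) ≤ exp (-1 / s) :=
    exp_le_exp.2 (by rw [neg_div, neg_le_neg_iff, div_le_iff₀ (by linarith)]; linarith)
  have hneg : exp (-s) ≤ exp (-(11 / 5)) := by gcongr
  have hlo : 0.62 ≤ exp (-(5 / 11)) := by
    have := exp_bound' (x := 5 / 11) (by norm_num) (by norm_num) (n := 3) (by norm_num)
    norm_num [sum_range_succ, Nat.factorial] at this
    rw [exp_neg, le_inv_comm₀ (by norm_num) (exp_pos _)]
    linarith
  have hhi : exp (-(11 / 5)) ≤ 0.12 := by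
    have := sum_le_exp_of_nonneg (x := 11 / 5) (by norm_num) 5
    norm_num [sum_range_succ, Nat.factorial] at this
    rw [exp_neg, inv_le_comm₀ (exp_pos _) (by norm_num)]
    linarith
  linarith

lemma eleven_fifths_le_sqrt {n : ℕ} (hn : 5 ≤ n) : 11 / 5 ≤ √(n : ℝ) :=
  le_sqrt_of_sq_le (by norm_num; exact le_trans (by norm_num) (Nat.cast_le.2 hn))

lemma newmanAlpha_pos (n : ℕ) : 0 < newmanAlpha n := exp_pos _

lemma newmanAlpha_lt_one {n : ℕ} (hn : 0 < n) : newmanAlpha n < 1 := by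
  rw [newmanAlpha, exp_lt_one_iff, neg_div, neg_lt_zero]
  positivity

lemma newmanAlpha_pow_self {n : ℕ} (hn : 0 < n) : newmanAlpha n ^ n = exp (-√n) := by
  have hs : 0 < √(n : ℝ) := by positivity
  rw [newmanAlpha, ← exp_nat_mul]
  congr 1
  field_simp
  rw [sq_sqrt (Nat.cast_nonneg n)]

lemma sqrt_mul_one_sub_newmanAlpha_le_one {n : ℕ} (hn : 0 < n) :
    √n * (1 - newmanAlpha n) ≤ 1 := by
  have hs : 0 < √(n : ℝ) := by positivity
  have := add_one_le_exp (-1 / √n)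
  calc √n * (1 - newmanAlpha n) ≤ √n * (1 / √n) := by
        rw [newmanAlpha]; gcongr; linarith [neg_div √n 1]
    _ = 1 := by field_simp

lemma sqrt_le_two_mul_sum_newmanAlpha_pow {n : ℕ} (hn : 5 ≤ n) :
    √n ≤ 2 * ∑ i ∈ Ico 1 n, newmanAlpha n ^ i := by
  have hn0 : 0 < n := by omega
  have hα1 := newmanAlpha_lt_one hn0
  have hhalf := one_half_le_exp_neg_one_div_sub_exp_neg (eleven_fifths_le_sqrt hn)
  have hstep := sqrt_mul_one_sub_newmanAlpha_le_one hn0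
  rw [geom_sum_Ico' hα1.ne (by omega : 1 ≤ n), pow_one, newmanAlpha_pow_self hn0,
    ← mul_div_assoc, le_div_iff₀ (sub_pos.2 hα1)]
  rw [newmanAlpha] at hstep ⊢
  linarith

lemma newmanPoly_pos {n : ℕ} {t : ℝ} (ht : 0 < t) : 0 < newmanPoly n t :=
  prod_pos fun i _ => by have := newmanAlpha_pos n; positivity

lemma abs_newmanPoly_neg_le {n : ℕ} (hn : 5 ≤ n) {x : ℝ} (hx1 : exp (-√n) < x) (hx2 : x ≤ 1) :
    |newmanPoly n (-x)| ≤ exp (-√n) * newmanPoly n x := by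
  have hn0 : 0 < n := by omega
  have hIco : Icc 1 (n - 1) = Ico 1 n :=
    Icc_sub_one_right_eq_Ico_of_not_isMin (by simpa using hn0.ne') 1
  calc |newmanPoly n (-x)| = ∏ i ∈ Ico 1 n, |newmanAlpha n ^ i - x| := by
        rw [newmanPoly, hIco, abs_prod]; simp_rw [neg_add_eq_sub]
    _ ≤ exp (-(2 * ∑ i ∈ Ico 1 n, newmanAlpha n ^ i)) *
          ∏ i ∈ Ico 1 n, (newmanAlpha n ^ i + x) :=
        prod_abs_pow_sub_le (newmanAlpha_pos n) (newmanAlpha_lt_one hn0)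
          (by rwa [newmanAlpha_pow_self hn0]) hx2
    _ ≤ exp (-√n) * newmanPoly n x := by
        rw [newmanPoly, hIco]
        simp_rw [add_comm x]
        have hx0 : 0 < x := (exp_pos _).trans hx1
        have := newmanAlpha_pos n
        gcongr exp ?_ * _
        linarith [sqrt_le_two_mul_sum_newmanAlpha_pow hn]

/-- Large-argument case in the proof of Lemma 1. -/
theorem newmanApprox_large_arg (n : ℕ) (hn : 5 ≤ n) (x : ℝ)
    (hx1 : Real.exp (-Real.sqrt n) < x) (hx2 : x ≤ 1) :
    |x - newmanApprox n x| ≤ 3 * Real.exp (-Real.sqrt n) := by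
  have hε : exp (-√n) ≤ 1 / 3 := by
    rw [exp_neg, inv_le_comm₀ (exp_pos _) (by norm_num)]
    linarith [add_one_le_exp √n, eleven_fifths_le_sqrt hn]
  exact abs_sub_mul_sub_div_add_le (abs_le.2 ⟨by linarith [exp_pos (-√n)], hx2⟩)
    (newmanPoly_pos ((exp_pos _).trans hx1)) (abs_newmanPoly_neg_le hn hx1 hx2) hε
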